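/- arXiv:1503.01882 — 5 statements merged into one kernel-verified Lean document; each statement's English description precedes it below -/
import Mathlib

section
/- For every real number x ≥ 0 that is not an integer, one has ∏_{i=0}^{⌈x⌉} (x−i)(x−i+2)(x−i+4)(x−i+6) < 0. (Equivalently: if x ≥ 0 and this product is nonnegative, then x is a nonnegative integer.) -/
/-! For `i < ⌈x⌉` all four factors are positive, while for `i = ⌈x⌉` the non-integrality of `x`
puts `x - i` in `(-1, 0)`, so exactly one factor of the whole product is negative. -/

section ShiftedProduct

variable {R : Type*} [CommRing R] [LinearOrder R] [IsStrictOrderedRing R] {y : R}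

lemma shifted_prod_pos (hy : 0 < y) : 0 < y * (y + 2) * (y + 4) * (y + 6) := by
  positivity

lemma shifted_prod_neg (hy₀ : -2 < y) (hy : y < 0) : y * (y + 2) * (y + 4) * (y + 6) < 0 := by
  have h2 : 0 < y + 2 := by linarith
  have h4 : 0 < y + 4 := by linarith
  have h6 : 0 < y + 6 := by linarith
  exact mul_neg_of_neg_of_pos (mul_neg_of_neg_of_pos (mul_neg_of_neg_of_pos hy h2) h4) h6

end ShiftedProduct

lemma lt_natCeil_of_not_isInt {x : ℝ} (hni : ¬ ∃ n : ℤ, x = (n : ℝ)) : x < ⌈x⌉₊ :=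
  (Nat.le_ceil x).lt_of_ne fun h => hni ⟨⌈x⌉₊, mod_cast h⟩

/-- For every real `x ≥ 0` that is not an integer,
`∏_{i=0}^{⌈x⌉} (x−i)(x−i+2)(x−i+4)(x−i+6) < 0`. -/
theorem hanlon_wales_rect_sign (x : ℝ) (hx : 0 ≤ x) (hni : ¬ ∃ n : ℤ, x = (n : ℝ)) :
    ∏ i ∈ Finset.range (⌈x⌉₊ + 1),
      ((x - i) * (x - i + 2) * (x - i + 4) * (x - i + 6)) < 0 := by
  rw [Finset.prod_range_succ]
  have hinit : ∀ i ∈ Finset.range ⌈x⌉₊, 0 < (x - i) * (x - i + 2) * (x - i + 4) * (x - i + 6) :=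
    fun i hi => shifted_prod_pos (sub_pos.2 (Nat.lt_ceil.1 (Finset.mem_range.1 hi)))
  have hlast : -2 < x - ⌈x⌉₊ := by linarith [Nat.ceil_lt_add_one hx]
  exact mul_neg_of_pos_of_neg (Finset.prod_pos hinit)
    (shifted_prod_neg hlast (sub_neg.2 (lt_natCeil_of_not_isInt hni)))
end

section
/- Let I be a finite set, G a finite group acting on I, and for g ∈ G let P_g be the I × I real permutation matrix of the action (so (P_g w)_i = w_{g⁻¹·i}). Let A be a real I × I matrix commuting with P_g for every g ∈ G, and set B := Σ_{g ∈ G} A·P_g. Suppose B is positive semidefinite, and suppose v ∈ ℝ^I and μ ∈ ℝ satisfy A v = μ v and Σ_{g ∈ G} P_g v ≠ 0. Then μ ≥ 0. -/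
/-- The permutation matrix of the action of `g`: `(permMat g) i j = 1` iff `i = g • j`,
so that `(permMat g).mulVec w i = w (g⁻¹ • i)`. -/
def permMat {I : Type*} [DecidableEq I] {G : Type*} [Group G] [MulAction G I]
    (g : G) : Matrix I I ℝ :=
  Matrix.of fun i j => if i = g • j then 1 else 0

open Matrix

/-!
The argument works for any orthogonal representation `ρ` of `G`, here `g ↦ P_g`.
For `u = Σ_g ρ(g) v`, `u` is `ρ`-invariant, so `‖u‖² = |G| ⟪v, u⟫` and
`⟪v, u⟫ > 0` once `u ≠ 0`. If `A` commutes with `ρ` and `A v = μ v`, then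
`B v = Σ_g ρ(g) A v = μ u` for `B = Σ_g A ρ(g)`, hence `0 ≤ ⟪v, B v⟫ = μ ⟪v, u⟫` forces `μ ≥ 0`.
-/

section OrthogonalRepresentation

variable {I G : Type*} [Fintype I] [DecidableEq I] [Group G] [Fintype G]
  (ρ : G →* Matrix I I ℝ)

theorem mulVec_sum_mulVec (h : G) (v : I → ℝ) :
    ρ h *ᵥ ∑ g, ρ g *ᵥ v = ∑ g, ρ g *ᵥ v := by
  simp_rw [mulVec_sum, mulVec_mulVec, ← map_mul]
  exact Fintype.sum_equiv (Equiv.mulLeft h) _ _ fun _ => rfl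

variable {ρ}

theorem sum_mulVec_dotProduct_self (hρ : ∀ g, (ρ g)ᵀ = ρ g⁻¹) (v : I → ℝ) :
    (∑ g, ρ g *ᵥ v) ⬝ᵥ (∑ g, ρ g *ᵥ v) = Fintype.card G * (v ⬝ᵥ ∑ g, ρ g *ᵥ v) := by
  set u := ∑ g, ρ g *ᵥ v
  calc u ⬝ᵥ u = ∑ g, (ρ g *ᵥ v) ⬝ᵥ u := sum_dotProduct _ _ _
    _ = ∑ g, v ⬝ᵥ (ρ g⁻¹ *ᵥ u) := Finset.sum_congr rfl fun g _ => by
      rw [dotProduct_comm, dotProduct_mulVec, ← mulVec_transpose, hρ, dotProduct_comm]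
    _ = Fintype.card G * (v ⬝ᵥ u) := by simp [u, mulVec_sum_mulVec]

theorem dotProduct_sum_mulVec_pos (hρ : ∀ g, (ρ g)ᵀ = ρ g⁻¹) {v : I → ℝ}
    (hu : ∑ g, ρ g *ᵥ v ≠ 0) : 0 < v ⬝ᵥ ∑ g, ρ g *ᵥ v := by
  have hnorm : 0 < (∑ g, ρ g *ᵥ v) ⬝ᵥ (∑ g, ρ g *ᵥ v) := by
    simpa using dotProduct_self_star_pos_iff.mpr hu
  rw [sum_mulVec_dotProduct_self hρ] at hnorm
  exact pos_of_mul_pos_right hnorm (Nat.cast_nonneg _)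

theorem eigenvalue_nonneg_of_posSemidef_sum_mul (hρ : ∀ g, (ρ g)ᵀ = ρ g⁻¹)
    {A : Matrix I I ℝ} (hA : ∀ g, Commute A (ρ g)) (hB : (∑ g, A * ρ g).PosSemidef)
    {v : I → ℝ} {μ : ℝ} (hv : A *ᵥ v = μ • v) (hu : ∑ g, ρ g *ᵥ v ≠ 0) : 0 ≤ μ := by
  have hBv : (∑ g, A * ρ g) *ᵥ v = μ • ∑ g, ρ g *ᵥ v := by
    simp_rw [sum_mulVec, Finset.smul_sum, (hA _).eq, ← mulVec_mulVec, hv, mulVec_smul]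
  have hquad := hB.dotProduct_mulVec_nonneg v
  rw [hBv, star_trivial, dotProduct_smul, smul_eq_mul] at hquad
  exact nonneg_of_mul_nonneg_left hquad (dotProduct_sum_mulVec_pos hρ hu)

end OrthogonalRepresentation

theorem permMat_eq_permMatrixHom {I G : Type*} [Fintype I] [DecidableEq I] [Group G]
    [MulAction G I] (g : G) :
    permMat g = (permMatrixHom.comp (MulAction.toPermHom G I) g : Matrix I I ℝ) := by
  ext i j
  simp [permMat, PEquiv.toMatrix_apply, eq_comm, eq_inv_smul_iff]

/-- Let `A` be a real `I × I` matrix commuting with the permutation matrices `P_g` of a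
finite group `G` acting on the finite set `I`, and let `B := Σ_{g∈G} A·P_g` be positive
semidefinite.  If `A v = μ v` and `Σ_{g∈G} P_g v ≠ 0`, then `μ ≥ 0`. -/
theorem averaged_eigenvalue_nonneg {I : Type*} [Fintype I] [DecidableEq I]
    {G : Type*} [Group G] [Fintype G] [MulAction G I]
    (A : Matrix I I ℝ)
    (hA : ∀ g : G, A * permMat g = permMat g * A)
    (hB : (∑ g : G, A * permMat g).PosSemidef)
    (v : I → ℝ) (μ : ℝ)
    (hv : A.mulVec v = μ • v)
    (hu : ∑ g : G, (permMat g).mulVec v ≠ 0) :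
    0 ≤ μ := by
  let ρ : G →* Matrix I I ℝ := permMatrixHom.comp (MulAction.toPermHom G I)
  have hρ : ∀ g, (ρ g)ᵀ = ρ g⁻¹ := fun g => by
    simp only [ρ, MonoidHom.comp_apply, map_inv, permMatrixHom_apply, transpose_permMatrix]
  simp only [permMat_eq_permMatrixHom] at hA hB hu
  exact eigenvalue_nonneg_of_posSemidef_sum_mul hρ hA hB hv hu
end

section
/- Let k ≥ 1 be an integer. In S_{8k}, let F be the involution with F(i) = 4k+i and F(4k+i) = i for i ∈ {1,…,4k}; let B be the subgroup generated by b_j := (4j−3, 4j−1)(4j−2, 4j) for j ∈ {1,…,2k}; let D be the set of d ∈ S_{8k} for which there exists π ∈ S_{2k} with d(4j−i) = 4π(j)−i for all j ∈ {1,…,2k}, i ∈ {0,1,2,3}; and let Q := {b·d : b ∈ B, d ∈ D}. For j ∈ {1,…,k} let Row_j := {4j−3, 4j−2, 4j−1, 4j} ∪ {4k+4j−3, 4k+4j−2, 4k+4j−1, 4k+4j}, and let R be the group of all r ∈ S_{8k} with r(Row_j) = Row_j for every j. Let the eight columns be K₁ := {4j−3 : j ∈ [k]}, K₂ := {4k+4j−3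 : j ∈ [k]}, K₃ := {4j−2 : j ∈ [k]}, K₄ := {4k+4j−2 : j ∈ [k]}, K₅ := {4j−1 : j ∈ [k]}, K₆ := {4k+4j−1 : j ∈ [k]}, K₇ := {4j : j ∈ [k]}, K₈ := {4k+4j : j ∈ [k]}, and let C be the group of all c ∈ S_{8k} with c(K_i) = K_i for every i ∈ {1,…,8}. Then for all q ∈ Q, c ∈ C, r ∈ R: if q F q⁻¹ = (c r) F (c r)⁻¹, then sgn(c) = 1. -/
/-!
Index the cells of the tableau by `(row j, column a)`. An element `c` of the column group permutes
each column `a` by some `σ a`, so `sgn c = ∏ₐ sgn (σ a)`.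

Call `{4j-3, 4j-2}` and `{4j-1, 4j}` pairs. The generators `b_j`, the elements of `D` and `F` all
map pairs to pairs and keep the position inside a pair; hence so does `M = q F q⁻¹ = c N c⁻¹`,
where `N = r F r⁻¹` is a fixed-point-free involution preserving every row. In tableau coordinates
(columns indexed by `Fin 8` as in `colVal`) the pairs are `{(j, a), (j, a + 2)}` with
`a ∈ {0, 1, 4, 5}`. Following both cells of such a pair through `c⁻¹`, `N`, `c` shows that
`τ a := (σ (a + 2))⁻¹ * σ a` satisfies `τ b j = τ a j` whenever `N` sends `(j, a)` to `(j, b)`, and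
that `b ∈ {0, 1, 4, 5}` again. So at every row the four values `τ a j`, `a ∈ {0, 1, 4, 5}`, agree
in pairs, which forces `∏ sgn (τ a) = 1`; this product is `sgn c`.
-/

/-- The ground set `{1, …, 8k}` of the symmetric group `S_{8k}`. -/
abbrev Pt (k : ℕ) := {i : ℕ // i ∈ Finset.Icc 1 (8 * k)}

/-- The block indices `{1, …, 2k}`. -/
abbrev Blk (k : ℕ) := {j : ℕ // j ∈ Finset.Icc 1 (2 * k)}

/-- The permutation `b_j = (4j−3, 4j−1)(4j−2, 4j)` of `{1,…,8k}`, described pointwise. -/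
def IsBGen (k : ℕ) (b : Equiv.Perm (Pt k)) : Prop :=
  ∃ j : Blk k, ∀ m : Pt k, (b m).val =
    if m.val = 4 * j.val - 3 then 4 * j.val - 1
    else if m.val = 4 * j.val - 1 then 4 * j.val - 3
    else if m.val = 4 * j.val - 2 then 4 * j.val
    else if m.val = 4 * j.val then 4 * j.val - 2
    else m.val

/-- The subgroup `B` generated by the permutations `b_j`, `j ∈ {1,…,2k}`. -/
def Bsub (k : ℕ) : Subgroup (Equiv.Perm (Pt k)) :=
  Subgroup.closure {b | IsBGen k b}

/-- The set `D` of permutations `d` of `{1,…,8k}` for which there is `π ∈ S_{2k}` with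
`d(4j−i) = 4π(j)−i` for all `j ∈ {1,…,2k}` and `i ∈ {0,1,2,3}`. -/
def Dset (k : ℕ) : Set (Equiv.Perm (Pt k)) :=
  {d | ∃ π : Equiv.Perm (Blk k), ∀ (j : Blk k) (i : ℕ), i ≤ 3 →
    ∀ m : Pt k, m.val = 4 * j.val - i → (d m).val = 4 * (π j).val - i}

/-- The set `Q = B·D`. -/
def Qset (k : ℕ) : Set (Equiv.Perm (Pt k)) :=
  {q | ∃ b ∈ Bsub k, ∃ d ∈ Dset k, q = b * d}

/-- The `j`-th row `Row_j = {4j−3,…,4j} ∪ {4k+4j−3,…,4k+4j}` of the Young tableau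
for the partition `(8,8,…,8)`. -/
def RowSet (k j : ℕ) : Set (Pt k) :=
  {m | m.val ∈ ({4 * j - 3, 4 * j - 2, 4 * j - 1, 4 * j,
      4 * k + 4 * j - 3, 4 * k + 4 * j - 2, 4 * k + 4 * j - 1, 4 * k + 4 * j} : Set ℕ)}

/-- `r` belongs to the row group `R`: it maps every row `Row_j`, `j ∈ {1,…,k}`, onto itself. -/
def InRowGroup (k : ℕ) (r : Equiv.Perm (Pt k)) : Prop :=
  ∀ j : ℕ, 1 ≤ j → j ≤ k → (⇑r '' RowSet k j) = RowSet k j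

/-- The entry of the `i`-th column (`i ∈ {1,…,8}`, here `i : Fin 8`) in the `j`-th row. -/
def colVal (k : ℕ) (i : Fin 8) (j : ℕ) : ℕ :=
  match i with
  | 0 => 4 * j - 3
  | 1 => 4 * k + 4 * j - 3
  | 2 => 4 * j - 2
  | 3 => 4 * k + 4 * j - 2
  | 4 => 4 * j - 1
  | 5 => 4 * k + 4 * j - 1
  | 6 => 4 * j
  | 7 => 4 * k + 4 * j

/-- The `i`-th column `K_i = {colVal k i j : j ∈ {1,…,k}}` of the Young tableau. -/
def ColSet (k : ℕ) (i : Fin 8) : Set (Pt k) :=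
  {m | ∃ j : ℕ, 1 ≤ j ∧ j ≤ k ∧ m.val = colVal k i j}

/-- `c` belongs to the column group `C`: it maps every column `K_i` onto itself. -/
def InColGroup (k : ℕ) (c : Equiv.Perm (Pt k)) : Prop :=
  ∀ i : Fin 8, (⇑c '' ColSet k i) = ColSet k i

open Equiv Equiv.Perm

namespace Equiv.Perm

section Sign

variable {α : Type*} [Fintype α] [DecidableEq α]

/- `x`, `y`, `z` are `a * b`, `a * c`, `b * c` for disjointly supported `a`, `b`, `c` (`a` lives
where `x` and `y` both move), so `x * y * z = (a * b * c) ^ 2`, and `g` below is `a * b * c`. -/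
theorem sign_mul_sign_mul_sign_eq_one_of_forall {x y z : Perm α}
    (h : ∀ s, (x s = s ∧ y s = z s) ∨ (y s = s ∧ x s = z s) ∨ (z s = s ∧ x s = y s)) :
    sign x * sign y * sign z = 1 := by
  set g : α → α := fun s => if x s = s then y s else x s
  have hg : Function.Injective g := by
    intro s t hst
    grind [EmbeddingLike.apply_eq_iff_eq]
  set G : Perm α := Equiv.ofBijective g hg.bijective_of_finite
  have hxyz : x * y * z = G * G := by
    ext s
    simp only [Perm.mul_apply, G, Equiv.ofBijective_apply, g]
    grind [EmbeddingLike.apply_eq_iff_eq]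
  rw [← map_mul, ← map_mul, hxyz, map_mul, Int.units_mul_self]

theorem sign_mul_sign_mul_sign_mul_sign_eq_one_of_forall {w x y z : Perm α}
    (h : ∀ s, (w s = x s ∧ y s = z s) ∨ (w s = y s ∧ x s = z s) ∨ (w s = z s ∧ x s = y s)) :
    sign w * sign x * sign y * sign z = 1 := by
  have key := sign_mul_sign_mul_sign_eq_one_of_forall (x := w⁻¹ * x) (y := w⁻¹ * y)
    (z := w⁻¹ * z) fun s => by
      simp only [Perm.mul_apply, Perm.inv_eq_iff_eq, EmbeddingLike.apply_eq_iff_eq]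
      grind
  simp only [map_mul, sign_inv] at key
  rw [← key, ← one_mul (sign w * _ * _ * _), ← Int.units_mul_self (sign w)]
  ac_rfl

end Sign

theorem exists_prodCongrLeft_eq {β γ : Type*} {g : Perm (β × γ)} (hg : ∀ p, (g p).2 = p.2) :
    ∃ σ : γ → Perm β, prodCongrLeft σ = g := by
  have fix (j : β) (b : γ) : ((g (j, b)).1, b) = g (j, b) := Prod.ext rfl (hg (j, b)).symm
  have fix' (j : β) (b : γ) : ((g.symm (j, b)).1, b) = g.symm (j, b) :=
    Prod.ext rfl (by simpa using hg (g.symm (j, b)))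
  refine ⟨fun b => ⟨fun j => (g (j, b)).1, fun j => (g.symm (j, b)).1, fun j => ?_, fun j => ?_⟩,
    Equiv.ext fun ⟨j, b⟩ => fix j b⟩
  · simp [fix]
  · simp [fix']

def fiberStabilizer {α β γ : Type*} (κ : α → β) (ι : α → γ) : Subgroup (Perm α) where
  carrier := {g | (∀ x y, κ (g x) = κ (g y) ↔ κ x = κ y) ∧ ∀ x, ι (g x) = ι x}
  mul_mem' := fun ⟨hg, hg'⟩ ⟨hh, hh'⟩ =>
    ⟨fun x y => (hg _ _).trans (hh x y), fun x => (hg' _).trans (hh' x)⟩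
  one_mem' := ⟨fun _ _ => Iff.rfl, fun _ => rfl⟩
  inv_mem' := fun {g} ⟨hg, hg'⟩ =>
    ⟨fun x y => by simpa using (hg (g⁻¹ x) (g⁻¹ y)).symm,
      fun x => by simpa using (hg' (g⁻¹ x)).symm⟩

theorem mem_fiberStabilizer {α β γ : Type*} {κ : α → β} {ι : α → γ} {g : Perm α} :
    g ∈ fiberStabilizer κ ι ↔ (∀ x y, κ (g x) = κ (g y) ↔ κ x = κ y) ∧ ∀ x, ι (g x) = ι x :=
  Iff.rfl

end Equiv.Perm

theorem Nat.eq_and_eq_of_mul_add_eq {k s s' j j' : ℕ} (hj : j < k) (hj' : j' < k)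
    (h : k * s + j = k * s' + j') : s = s' ∧ j = j' := by
  have hk : 0 < k := by omega
  obtain ⟨h1, h2⟩ := (Nat.div_mod_unique hk).mpr ⟨by rw [add_comm, h], hj⟩
  obtain ⟨h1', h2'⟩ := (Nat.div_mod_unique hk).mpr ⟨add_comm _ _, hj'⟩
  exact ⟨h1.symm.trans h1', h2.symm.trans h2'⟩

theorem Fin.val_add_two_of_div_two_mod_two {a : Fin 8} (ha : a.val / 2 % 2 = 0) :
    (a + 2).val = a.val + 2 := by
  rw [Fin.val_add]; simp; omega

theorem Fin.pairing_of_involution {X : Type*} (f : Fin 8 → X) (μ : Fin 8 → Fin 8)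
    (hμ : ∀ a : Fin 8, a.val / 2 % 2 = 0 →
      (μ a).val / 2 % 2 = 0 ∧ μ a ≠ a ∧ μ (μ a) = a ∧ f (μ a) = f a) :
    (f 0 = f 1 ∧ f 4 = f 5) ∨ (f 0 = f 4 ∧ f 1 = f 5) ∨ (f 0 = f 5 ∧ f 1 = f 4) := by
  obtain ⟨h0, n0, i0, f0⟩ := hμ 0 rfl
  have partner : ∀ c d : Fin 8, c.val / 2 % 2 = 0 → c ≠ 0 → c ≠ μ 0 →
      (∀ m : Fin 8, m.val / 2 % 2 = 0 → m ≠ c → m ≠ 0 → m ≠ μ 0 → m = d) → f c = f d := by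
    intro c d hc hc0 hcμ hd
    -- `μ c` is neither `0` nor `μ 0`, as `μ` is an involution; so it is `d`.
    obtain ⟨h, n, i, fc⟩ := hμ c hc
    rw [← hd (μ c) h n (fun e => hcμ (by rw [← i, e])) (fun e => hc0 (by rw [← i, e, i0])), fc]
  have : μ 0 = 1 ∨ μ 0 = 4 ∨ μ 0 = 5 := by revert h0 n0; generalize μ 0 = m; revert m; decide
  rcases this with e | e | e <;> rw [e] at f0 partner
  · exact .inl ⟨f0.symm, partner 4 5 rfl (by decide) (by decide) (by decide)⟩
  · exact .inr (.inl ⟨f0.symm, partner 1 5 rfl (by decide) (by decide) (by decide)⟩)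
  · exact .inr (.inr ⟨f0.symm, partner 1 4 rfl (by decide) (by decide) (by decide)⟩)

theorem Pt.one_le_val {k : ℕ} (m : Pt k) : 1 ≤ m.val := (Finset.mem_Icc.mp m.2).1

theorem Pt.val_le {k : ℕ} (m : Pt k) : m.val ≤ 8 * k := (Finset.mem_Icc.mp m.2).2

namespace RectTableau

variable {k : ℕ}

def pairOf (m : Pt k) : ℕ := (m.val - 1) / 2

def posInPair (m : Pt k) : ℕ := (m.val - 1) % 2

def pairGroup (k : ℕ) : Subgroup (Perm (Pt k)) := fiberStabilizer (pairOf (k := k)) posInPair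

theorem mem_pairGroup_of_isBGen {b : Perm (Pt k)} (hb : IsBGen k b) : b ∈ pairGroup k := by
  obtain ⟨j, hj⟩ := hb
  have := Finset.mem_Icc.mp j.2
  refine mem_fiberStabilizer.mpr ⟨fun m m' => ?_, fun m => ?_⟩ <;>
    simp only [pairOf, posInPair, hj] <;> have := m.one_le_val
  · have := m'.one_le_val; split_ifs <;> omega
  · split_ifs <;> omega

theorem Bsub_le_pairGroup : Bsub k ≤ pairGroup k :=
  (Subgroup.closure_le _).mpr fun _ => mem_pairGroup_of_isBGen

theorem mem_pairGroup_of_mem_Dset {d : Perm (Pt k)} (hd : d ∈ Dset k) : d ∈ pairGroup k := by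
  obtain ⟨π, hπ⟩ := hd
  let J (m : Pt k) : Blk k := ⟨(m.val - 1) / 4 + 1, by
    have := m.one_le_val; have := m.val_le; simp only [Finset.mem_Icc]; omega⟩
  have hval (m : Pt k) : (d m).val = 4 * (π (J m)).val - (3 - (m.val - 1) % 4) :=
    hπ (J m) _ (by omega) m (by have := m.one_le_val; simp only [J]; omega)
  have hJ (m m' : Pt k) :
      (π (J m)).val = (π (J m')).val ↔ (m.val - 1) / 4 = (m'.val - 1) / 4 := by
    rw [← Subtype.ext_iff, π.injective.eq_iff, Subtype.ext_iff]; simp [J]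
  have hπ_pos (m : Pt k) : 1 ≤ (π (J m)).val := (Finset.mem_Icc.mp (π (J m)).2).1
  refine mem_fiberStabilizer.mpr ⟨fun m m' => ?_, fun m => ?_⟩ <;>
    simp only [pairOf, posInPair, hval] <;> have := m.one_le_val <;> have := hπ_pos m
  · have := m'.one_le_val; have := hπ_pos m'; have := hJ m m'; omega
  · omega

theorem mem_pairGroup_of_mem_Qset {q : Perm (Pt k)} (hq : q ∈ Qset k) : q ∈ pairGroup k := by
  obtain ⟨b, hb, d, hd, rfl⟩ := hq
  exact mul_mem (Bsub_le_pairGroup hb) (mem_pairGroup_of_mem_Dset hd)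

def pt (j : Fin k) (a : Fin 8) : Pt k :=
  ⟨colVal k a (j + 1), by
    have := j.isLt; simp only [Finset.mem_Icc]; fin_cases a <;> simp only [colVal] <;> omega⟩

theorem pt_val (j : Fin k) (a : Fin 8) :
    (pt j a).val = 4 * (k * (a.val % 2) + j.val) + a.val / 2 + 1 := by
  fin_cases a <;> simp [pt, colVal] <;> omega

theorem pairOf_pt (j : Fin k) (a : Fin 8) :
    pairOf (pt j a) = 2 * (k * (a.val % 2) + j.val) + a.val / 4 := by
  simp only [pairOf, pt_val]; omega

theorem posInPair_pt (j : Fin k) (a : Fin 8) : posInPair (pt j a) = a.val / 2 % 2 := by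
  simp only [posInPair, pt_val]; omega

theorem pairOf_pt_add_two (j : Fin k) {a : Fin 8} (ha : a.val / 2 % 2 = 0) :
    pairOf (pt j (a + 2)) = pairOf (pt j a) := by
  rw [pairOf_pt, pairOf_pt, Fin.val_add_two_of_div_two_mod_two ha, Nat.add_mod_right]; omega

theorem eq_of_pairOf_pt_eq {j j' : Fin k} {a a' : Fin 8} (h : pairOf (pt j a) = pairOf (pt j' a'))
    (ha : a.val / 2 % 2 = 0) (ha' : a'.val / 2 % 2 = 1) : j' = j ∧ a' = a + 2 := by
  simp only [pairOf_pt] at h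
  obtain ⟨hs, hj⟩ := Nat.eq_and_eq_of_mul_add_eq j.isLt j'.isLt
    (by omega : k * (a.val % 2) + j.val = k * (a'.val % 2) + j'.val)
  exact ⟨Fin.ext hj.symm, Fin.ext (by rw [Fin.val_add_two_of_div_two_mod_two ha]; omega)⟩

theorem pt_injective : Function.Injective fun p : Fin k × Fin 8 => pt p.1 p.2 := by
  rintro ⟨j, a⟩ ⟨j', a'⟩ h
  have h := congrArg Subtype.val h
  simp only [pt_val] at h
  obtain ⟨hs, hj⟩ := Nat.eq_and_eq_of_mul_add_eq j.isLt j'.isLt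
    (by omega : k * (a.val % 2) + j.val = k * (a'.val % 2) + j'.val)
  ext <;> simp <;> omega

noncomputable def ptEquiv (k : ℕ) : Fin k × Fin 8 ≃ Pt k :=
  Equiv.ofBijective _
    ((Fintype.bijective_iff_injective_and_card _).mpr ⟨pt_injective, by simp [mul_comm]⟩)

@[simp] theorem ptEquiv_apply (p : Fin k × Fin 8) : ptEquiv k p = pt p.1 p.2 := rfl

noncomputable def row (m : Pt k) : Fin k := ((ptEquiv k).symm m).1

noncomputable def col (m : Pt k) : Fin 8 := ((ptEquiv k).symm m).2

@[simp] theorem pt_row_col (m : Pt k) : pt (row m) (col m) = m := (ptEquiv k).apply_symm_apply m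

@[simp] theorem row_pt (j : Fin k) (a : Fin 8) : row (pt j a) = j :=
  congrArg Prod.fst ((ptEquiv k).symm_apply_apply (j, a))

@[simp] theorem col_pt (j : Fin k) (a : Fin 8) : col (pt j a) = a :=
  congrArg Prod.snd ((ptEquiv k).symm_apply_apply (j, a))

theorem pt_surjective (m : Pt k) : ∃ j a, pt j a = m := ⟨_, _, pt_row_col m⟩

theorem mem_ColSet_iff {m : Pt k} {i : Fin 8} : m ∈ ColSet k i ↔ col m = i := by
  obtain ⟨j, a, rfl⟩ := pt_surjective m
  simp only [ColSet, Set.mem_ofPred_eq, col_pt]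
  constructor
  · rintro ⟨J, hJ1, hJk, h⟩
    have e : (pt (⟨J - 1, by omega⟩ : Fin k) i).val = colVal k i J := by
      simp only [pt]; rw [Nat.sub_add_cancel hJ1]
    simpa using congrArg col (Subtype.ext (h.trans e.symm))
  · rintro rfl
    exact ⟨j + 1, by omega, j.isLt, rfl⟩

theorem mem_RowSet_iff {m : Pt k} {J : ℕ} (hJ1 : 1 ≤ J) (hJk : J ≤ k) :
    m ∈ RowSet k J ↔ (row m).val + 1 = J := by
  obtain ⟨j, a, rfl⟩ := pt_surjective m
  have := j.isLt
  rw [row_pt]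
  simp only [RowSet, Set.mem_ofPred_eq, Set.mem_insert_iff, Set.mem_singleton_iff, pt]
  fin_cases a <;> simp only [colVal] <;> omega

theorem col_apply_of_inColGroup {c : Perm (Pt k)} (hc : InColGroup k c) (m : Pt k) :
    col (c m) = col m :=
  mem_ColSet_iff.mp (hc (col m) ▸ ⟨m, mem_ColSet_iff.mpr rfl, rfl⟩)

theorem row_apply_of_inRowGroup {r : Perm (Pt k)} (hr : InRowGroup k r) (m : Pt k) :
    row (r m) = row m := by
  have hJ1 : 1 ≤ (row m).val + 1 := by omega
  have hJk : (row m).val + 1 ≤ k := (row m).isLt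
  have := (mem_RowSet_iff hJ1 hJk).mp
    (hr _ hJ1 hJk ▸ ⟨m, (mem_RowSet_iff hJ1 hJk).mpr rfl, rfl⟩ : r m ∈ RowSet k _)
  exact Fin.ext (by omega)

section SwapHalves

variable {F : Perm (Pt k)}
  (hF : ∀ m : Pt k, (F m).val = if m.val ≤ 4 * k then m.val + 4 * k else m.val - 4 * k)
include hF

theorem mem_pairGroup_of_swapHalves : F ∈ pairGroup k := by
  refine mem_fiberStabilizer.mpr ⟨fun m m' => ?_, fun m => ?_⟩ <;>
    simp only [pairOf, posInPair, hF] <;> have := m.one_le_val <;> have := m.val_le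
  · have := m'.one_le_val; have := m'.val_le; split_ifs <;> omega
  · split_ifs <;> omega

theorem row_swapHalves (m : Pt k) : row (F m) = row m := by
  have hJ1 : 1 ≤ (row m).val + 1 := by omega
  have hJk : (row m).val + 1 ≤ k := (row m).isLt
  have hm := (mem_RowSet_iff hJ1 hJk (m := m)).mpr rfl
  suffices F m ∈ RowSet k ((row m).val + 1) from
    Fin.ext (by have := (mem_RowSet_iff hJ1 hJk).mp this; omega)
  simp only [RowSet, Set.mem_ofPred_eq, Set.mem_insert_iff, Set.mem_singleton_iff, hF] at hm ⊢
  have := m.one_le_val; have := m.val_le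
  split_ifs <;> omega

theorem swapHalves_apply_ne (m : Pt k) : F m ≠ m := fun h => by
  have h := congrArg Subtype.val h
  rw [hF] at h
  have := m.one_le_val; have := m.val_le
  split_ifs at h <;> omega

theorem swapHalves_swapHalves (m : Pt k) : F (F m) = m := by
  apply Subtype.ext
  rw [hF, hF]
  have := m.one_le_val; have := m.val_le
  split_ifs <;> omega

end SwapHalves

theorem exists_colPerm_of_inColGroup {c : Perm (Pt k)} (hc : InColGroup k c) :
    ∃ σ : Fin 8 → Perm (Fin k),
      (∀ j a, c (pt j a) = pt (σ a j) a) ∧ sign c = ∏ a, sign (σ a) := by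
  obtain ⟨σ, hσ⟩ := exists_prodCongrLeft_eq (g := (ptEquiv k).symm.permCongr c) fun p => by
    simp [permCongr_apply, ← col.eq_def, col_apply_of_inColGroup hc]
  refine ⟨σ, fun j a => ?_, by rw [← sign_permCongr (ptEquiv k).symm c, ← hσ, sign_prodCongrLeft]⟩
  simpa using congrArg (ptEquiv k) (Equiv.ext_iff.mp hσ (j, a)).symm

theorem colPerm_inv_mul_apply_eq_of_conj_mem_pairGroup {c N : Perm (Pt k)}
    {σ : Fin 8 → Perm (Fin k)} {ν : Fin k → Fin 8 → Fin 8}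
    (hσ : ∀ j a, c (pt j a) = pt (σ a j) a) (hν : ∀ j a, N (pt j a) = pt j (ν j a))
    (hM : c * N * c⁻¹ ∈ pairGroup k) (j : Fin k) {a : Fin 8} (ha : a.val / 2 % 2 = 0) :
    (ν j a).val / 2 % 2 = 0 ∧
      ((σ (ν j a + 2))⁻¹ * σ (ν j a)) j = ((σ (a + 2))⁻¹ * σ a) j := by
  obtain ⟨hpair, hpos⟩ := mem_fiberStabilizer.mp hM
  set b := ν j a
  set j₂ := ((σ (a + 2))⁻¹ * σ a) j
  set b₂ := ν j₂ (a + 2)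
  have hc_inv (j' : Fin k) (a' : Fin 8) : c⁻¹ (pt (σ a' j') a') = pt j' a' := by
    rw [← hσ]; exact c.symm_apply_apply _
  have hMp : (c * N * c⁻¹) (pt (σ a j) a) = pt (σ b j) b := by
    simp only [Perm.mul_apply, hc_inv, hν, hσ, b]
  have hMp₂ : (c * N * c⁻¹) (pt (σ a j) (a + 2)) = pt (σ b₂ j₂) b₂ := by
    have : σ a j = σ (a + 2) j₂ := by simp [j₂]
    simp only [Perm.mul_apply, this, hc_inv, hν, hσ, b₂]
  have hb : b.val / 2 % 2 = 0 := by
    have := hpos (pt (σ a j) a)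
    rwa [hMp, posInPair_pt, posInPair_pt, ha] at this
  have hb₂ : b₂.val / 2 % 2 = 1 := by
    have := hpos (pt (σ a j) (a + 2))
    rw [hMp₂, posInPair_pt, posInPair_pt, Fin.val_add_two_of_div_two_mod_two ha] at this
    omega
  obtain ⟨hrow, hcol⟩ := eq_of_pairOf_pt_eq
    (by rw [← hMp, ← hMp₂, hpair, pairOf_pt_add_two _ ha]) hb hb₂
  refine ⟨hb, ?_⟩
  rw [Perm.mul_apply, ← hcol, ← hrow]
  exact (σ b₂).symm_apply_apply j₂

theorem sign_eq_one_of_conj_mem_pairGroup {c N : Perm (Pt k)} (hc : InColGroup k c)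
    (hrow : ∀ m, row (N m) = row m) (hinv : ∀ m, N (N m) = m) (hne : ∀ m, N m ≠ m)
    (hM : c * N * c⁻¹ ∈ pairGroup k) : sign c = 1 := by
  obtain ⟨σ, hσ, hsign⟩ := exists_colPerm_of_inColGroup hc
  set ν : Fin k → Fin 8 → Fin 8 := fun j a => col (N (pt j a))
  have hν (j : Fin k) (a : Fin 8) : N (pt j a) = pt j (ν j a) := by
    conv_lhs => rw [← pt_row_col (N (pt j a))]
    rw [hrow, row_pt]
  set τ : Fin 8 → Perm (Fin k) := fun a => (σ (a + 2))⁻¹ * σ a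
  have hpairing (j : Fin k) :
      (τ 0 j = τ 1 j ∧ τ 4 j = τ 5 j) ∨ (τ 0 j = τ 4 j ∧ τ 1 j = τ 5 j) ∨
        (τ 0 j = τ 5 j ∧ τ 1 j = τ 4 j) := by
    refine Fin.pairing_of_involution (fun a => τ a j) (ν j) fun a ha => ?_
    obtain ⟨hb, hτ⟩ := colPerm_inv_mul_apply_eq_of_conj_mem_pairGroup hσ hν hM j ha
    refine ⟨hb, fun h => hne (pt j a) (by rw [hν, h]), ?_, hτ⟩
    show col (N (pt j (ν j a))) = a
    rw [← hν, hinv, col_pt]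
  rw [hsign, Fin.prod_univ_eight, ← sign_mul_sign_mul_sign_mul_sign_eq_one_of_forall hpairing]
  simp only [τ, Perm.sign_mul, sign_inv, Fin.reduceAdd]
  ac_rfl

end RectTableau

open RectTableau

theorem sign_condition_rect_general (k : ℕ) (F : Equiv.Perm (Pt k))
    (hF : ∀ m : Pt k, (F m).val = if m.val ≤ 4 * k then m.val + 4 * k else m.val - 4 * k)
    (q c r : Equiv.Perm (Pt k))
    (hq : q ∈ Qset k) (hc : InColGroup k c) (hr : InRowGroup k r)
    (hqcr : q * F * q⁻¹ = (c * r) * F * (c * r)⁻¹) :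
    Equiv.Perm.sign c = 1 := by
  have hrow_inv (m : Pt k) : row (r⁻¹ m) = row m := by
    simpa using (row_apply_of_inRowGroup hr (r⁻¹ m)).symm
  refine sign_eq_one_of_conj_mem_pairGroup (N := r * F * r⁻¹) hc (fun m => ?_) (fun m => ?_)
    (fun m => ?_) ?_
  · rw [Perm.mul_apply, Perm.mul_apply, row_apply_of_inRowGroup hr, row_swapHalves hF, hrow_inv]
  · simp [swapHalves_swapHalves hF]
  · exact fun h => swapHalves_apply_ne hF _ (Perm.eq_inv_iff_eq.mpr h)
  · have hq' := mem_pairGroup_of_mem_Qset hq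
    have hconj : c * (r * F * r⁻¹) * c⁻¹ = q * F * q⁻¹ := by rw [hqcr]; group
    rw [hconj]
    exact mul_mem (mul_mem hq' (mem_pairGroup_of_swapHalves hF)) (inv_mem hq')

/-- Let `F ∈ S_{8k}` be the involution `i ↦ 4k+i`, `4k+i ↦ i` (`i ∈ [4k]`).  For all
`q ∈ Q = B·D`, `c` in the column group `C` and `r` in the row group `R` of the Young
tableau of the partition `(8,8,…,8)` of `8k`: if `q·F = cr·F` (conjugation action),
then `sgn(c) = 1`. -/
theorem sign_condition_rect (k : ℕ) (hk : 1 ≤ k) (F : Equiv.Perm (Pt k))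
    (hF : ∀ m : Pt k, (F m).val = if m.val ≤ 4 * k then m.val + 4 * k else m.val - 4 * k)
    (q c r : Equiv.Perm (Pt k))
    (hq : q ∈ Qset k) (hc : InColGroup k c) (hr : InRowGroup k r)
    (hqcr : q * F * q⁻¹ = (c * r) * F * (c * r)⁻¹) :
    Equiv.Perm.sign c = 1 :=
  sign_condition_rect_general k F hF q c r hq hc hr hqcr
end

section
/- Let k ≥ 1 be an integer. In S_{8k}, let F be the involution with F(i) = 4k+i and F(4k+i) = i for i ∈ {1,…,4k}; let B be the subgroup generated by b_j := (4j−3, 4j−1)(4j−2, 4j) for j ∈ {1,…,2k}; let D be the set of d ∈ S_{8k} for which there exists π ∈ S_{2k} with d(4j−i) = 4π(j)−i for all j ∈ {1,…,2k}, i ∈ {0,1,2,3}; and let Q := {b·d : b ∈ B, d ∈ D}. Let R be the group of all r ∈ S_{8k} with r({2, 4k+2}) = {2, 4k+2} (equivalently, r preserves both the row {2, 4k+2} and its complement {1,…,8k} \ {2, 4k+2}). Let C be the group of all c ∈ S_{8k} that fix every point outside {1, 2, 4k+1, 4k+2} and satisfy c({1,2}) = {1,2} and c({4k+1, 4k+2})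 = {4k+1, 4k+2}. Then for all q ∈ Q, c ∈ C, r ∈ R: if q F q⁻¹ = (c r) F (c r)⁻¹, then sgn(c) = 1. -/
/-- The second row `{2, 4k+2}` of the Young tableau of the partition `(8k−2, 2)`. -/
def SecondRow (k : ℕ) : Set (Pt k) := {m | m.val = 2 ∨ m.val = 4 * k + 2}

/-- `r` belongs to the row group `R`: it maps `{2, 4k+2}` onto itself (hence also its
complement onto itself). -/
def InRowGroup' (k : ℕ) (r : Equiv.Perm (Pt k)) : Prop :=
  (⇑r '' SecondRow k) = SecondRow k

/-- `c` belongs to the column group `C`: it fixes every point outside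
`{1, 2, 4k+1, 4k+2}`, maps `{1, 2}` onto itself and maps `{4k+1, 4k+2}` onto itself. -/
def InColGroup' (k : ℕ) (c : Equiv.Perm (Pt k)) : Prop :=
  (∀ m : Pt k, ¬ (m.val = 1 ∨ m.val = 2 ∨ m.val = 4 * k + 1 ∨ m.val = 4 * k + 2) →
    c m = m) ∧
  (⇑c '' {m : Pt k | m.val = 1 ∨ m.val = 2}) = {m : Pt k | m.val = 1 ∨ m.val = 2} ∧
  (⇑c '' {m : Pt k | m.val = 4 * k + 1 ∨ m.val = 4 * k + 2})
    = {m : Pt k | m.val = 4 * k + 1 ∨ m.val = 4 * k + 2}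

open Equiv

section PermLemmas

variable {α : Type*}

def fiberPreserving {β : Type*} (f : α → β) : Subgroup (Perm α) where
  carrier := {g | ∀ x, f (g x) = f x}
  one_mem' _ := rfl
  mul_mem' ha hb x := (ha _).trans (hb x)
  inv_mem' {g} hg x := by simpa using (hg (g⁻¹ x)).symm

theorem Equiv.Perm.apply_pair_of_image_pair {c : Perm α} {a b : α}
    (hc : c '' {a, b} = {a, b}) : c a = a ∧ c b = b ∨ c a = b ∧ c b = a := by
  rwa [Set.image_pair, Set.pair_eq_pair_iff] at hc

theorem Equiv.Perm.conj_apply_of_image_pair {r F : Perm α} {a b : α}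
    (hr : r '' {a, b} = {a, b}) (hFa : F a = b) (hFb : F b = a) :
    (r * F * r⁻¹) a = b := by
  rcases r.apply_pair_of_image_pair hr with ⟨hra, hrb⟩ | ⟨hra, hrb⟩
  · rw [Perm.mul_apply, Perm.mul_apply, Perm.inv_eq_iff_eq.mpr hra.symm, hFa, hrb]
  · rw [Perm.mul_apply, Perm.mul_apply, Perm.inv_eq_iff_eq.mpr hrb.symm, hFb, hra]

variable [DecidableEq α]

theorem Equiv.Perm.eq_one_or_eq_swap_mul_swap {c : Perm α} {p₁ p₂ q₁ q₂ : α}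
    (hp : p₁ ≠ p₂) (hq : q₁ ≠ q₂) (hp₁ : p₁ ∉ ({q₁, q₂} : Set α))
    (hp₂ : p₂ ∉ ({q₁, q₂} : Set α))
    (hfix : ∀ x, x ∉ ({p₁, p₂, q₁, q₂} : Set α) → c x = x)
    (hcp : c '' {p₁, p₂} = {p₁, p₂}) (hcq : c '' {q₁, q₂} = {q₁, q₂})
    (hmoves : c p₂ = p₂ ↔ c q₂ = q₂) :
    c = 1 ∨ c = swap p₁ p₂ * swap q₁ q₂ := by
  simp only [Set.mem_insert_iff, Set.mem_singleton_iff, not_or] at hp₁ hp₂ hfix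
  rcases c.apply_pair_of_image_pair hcp with ⟨hc₁, hc₂⟩ | ⟨hc₁, hc₂⟩ <;>
    rcases c.apply_pair_of_image_pair hcq with ⟨hd₁, hd₂⟩ | ⟨hd₁, hd₂⟩
  · left
    ext x
    by_cases hx : x = p₁ ∨ x = p₂ ∨ x = q₁ ∨ x = q₂
    · rcases hx with rfl | rfl | rfl | rfl <;> simp [*]
    · simp only [not_or] at hx
      simp [hfix x hx]
  · exact absurd (hd₂.symm.trans (hmoves.mp hc₂)) hq
  · exact absurd (hc₂.symm.trans (hmoves.mpr hd₂)) hp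
  · right
    ext x
    by_cases hx : x = p₁ ∨ x = p₂ ∨ x = q₁ ∨ x = q₂
    · rcases hx with rfl | rfl | rfl | rfl <;> simp [swap_apply_of_ne_of_ne, *, Ne.symm]
    · simp only [not_or] at hx
      simp [hfix x hx, swap_apply_of_ne_of_ne, hx]

end PermLemmas

def parity {k : ℕ} (m : Pt k) : ℕ := m.val % 2

theorem isBGen_mem_fiberPreserving {k : ℕ} {b : Perm (Pt k)} (hb : IsBGen k b) :
    b ∈ fiberPreserving (parity (k := k)) := by
  obtain ⟨j, hj⟩ := hb
  intro m
  have := Finset.mem_Icc.1 j.2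
  simp only [parity, hj m]
  split_ifs <;> omega

theorem Bsub_le_fiberPreserving (k : ℕ) : Bsub k ≤ fiberPreserving (parity (k := k)) :=
  (Subgroup.closure_le _).2 fun _ => isBGen_mem_fiberPreserving

theorem mem_fiberPreserving_of_mem_Dset {k : ℕ} {d : Perm (Pt k)} (hd : d ∈ Dset k) :
    d ∈ fiberPreserving (parity (k := k)) := by
  obtain ⟨π, hπ⟩ := hd
  intro m
  have hm := Finset.mem_Icc.1 m.2
  obtain ⟨j, hj⟩ : ∃ j : Blk k, j.val = (m.val + 3) / 4 :=
    ⟨⟨_, Finset.mem_Icc.2 (by omega)⟩, rfl⟩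
  have hdm := hπ j (4 * j.val - m.val) (by omega) m (by omega)
  have := Finset.mem_Icc.1 (π j).2
  simp only [parity]
  omega

theorem mem_fiberPreserving_of_mem_Qset {k : ℕ} {q : Perm (Pt k)} (hq : q ∈ Qset k) :
    q ∈ fiberPreserving (parity (k := k)) := by
  obtain ⟨b, hb, d, hd, rfl⟩ := hq
  exact mul_mem (Bsub_le_fiberPreserving k hb) (mem_fiberPreserving_of_mem_Dset hd)

theorem mem_fiberPreserving_of_shift {k : ℕ} {F : Perm (Pt k)}
    (hF : ∀ m : Pt k, (F m).val = if m.val ≤ 4 * k then m.val + 4 * k else m.val - 4 * k) :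
    F ∈ fiberPreserving (parity (k := k)) := by
  intro m
  have := Finset.mem_Icc.1 m.2
  simp only [parity, hF m]
  split_ifs <;> omega

theorem setOf_val_eq_or_eq {k : ℕ} (a b : Pt k) :
    {m : Pt k | m.val = a.val ∨ m.val = b.val} = {a, b} := by
  ext m
  simp only [Set.mem_ofPred_eq, Set.mem_insert_iff, Set.mem_singleton_iff, Subtype.val_inj]

theorem InColGroup'.sign_eq_one {k : ℕ} {c : Perm (Pt k)} (hc : InColGroup' k c)
    {p₂ q₂ : Pt k} (hp₂ : p₂.val = 2) (hq₂ : q₂.val = 4 * k + 2)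
    (hpar : parity (c p₂) = parity (c q₂)) : Perm.sign c = 1 := by
  have := Finset.mem_Icc.1 q₂.2
  obtain ⟨p₁, hp₁⟩ : ∃ p : Pt k, p.val = 1 := ⟨⟨1, Finset.mem_Icc.2 (by omega)⟩, rfl⟩
  obtain ⟨q₁, hq₁⟩ : ∃ p : Pt k, p.val = 4 * k + 1 := ⟨⟨_, Finset.mem_Icc.2 (by omega)⟩, rfl⟩
  obtain ⟨hfix, hc₁₂, hc₃₄⟩ := hc
  have hcp : c '' {p₁, p₂} = {p₁, p₂} := by rwa [← setOf_val_eq_or_eq, hp₁, hp₂]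
  have hcq : c '' {q₁, q₂} = {q₁, q₂} := by rwa [← setOf_val_eq_or_eq, hq₁, hq₂]
  have hfix' (x : Pt k) (hx : x ∉ ({p₁, p₂, q₁, q₂} : Set (Pt k))) : c x = x :=
    hfix x (by simp only [Set.mem_insert_iff, Set.mem_singleton_iff, Subtype.ext_iff] at hx; omega)
  have hpq (p : Pt k) (h : p = p₁ ∨ p = p₂) : p ∉ ({q₁, q₂} : Set (Pt k)) := by
    simp only [Set.mem_insert_iff, Set.mem_singleton_iff, Subtype.ext_iff] at h ⊢
    omega
  have hp : p₁ ≠ p₂ := Subtype.coe_ne_coe.1 (by omega)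
  have hq : q₁ ≠ q₂ := Subtype.coe_ne_coe.1 (by omega)
  have hmoves : c p₂ = p₂ ↔ c q₂ = q₂ := by
    simp only [parity] at hpar
    rcases c.apply_pair_of_image_pair hcp with ⟨-, h₂⟩ | ⟨-, h₂⟩ <;>
      rcases c.apply_pair_of_image_pair hcq with ⟨-, h₄⟩ | ⟨-, h₄⟩ <;>
      simp only [h₂, h₄, Subtype.ext_iff] at hpar ⊢ <;> omega
  rcases c.eq_one_or_eq_swap_mul_swap hp hq (hpq _ (.inl rfl)) (hpq _ (.inr rfl)) hfix' hcp hcq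
    hmoves with rfl | rfl
  · exact map_one _
  · rw [Perm.sign_mul, Perm.sign_swap hp, Perm.sign_swap hq, Int.units_mul_self]

/-- Let `F ∈ S_{8k}` be the involution `i ↦ 4k+i`, `4k+i ↦ i` (`i ∈ [4k]`).  For all
`q ∈ Q = B·D`, `c` in the column group `C` and `r` in the row group `R` of the Young
tableau of the partition `(8k−2, 2)` of `8k`: if `q·F = cr·F` (conjugation action),
then `sgn(c) = 1`. -/
theorem sign_condition_hook (k : ℕ) (hk : 1 ≤ k) (F : Equiv.Perm (Pt k))
    (hF : ∀ m : Pt k, (F m).val = if m.val ≤ 4 * k then m.val + 4 * k else m.val - 4 * k)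
    (q c r : Equiv.Perm (Pt k))
    (hq : q ∈ Qset k) (hc : InColGroup' k c) (hr : InRowGroup' k r)
    (hqcr : q * F * q⁻¹ = (c * r) * F * (c * r)⁻¹) :
    Equiv.Perm.sign c = 1 := by
  obtain ⟨p₂, hp₂⟩ : ∃ p : Pt k, p.val = 2 := ⟨⟨2, Finset.mem_Icc.2 (by omega)⟩, rfl⟩
  obtain ⟨q₂, hq₂⟩ : ∃ p : Pt k, p.val = 4 * k + 2 := ⟨⟨_, Finset.mem_Icc.2 (by omega)⟩, rfl⟩
  have hr' : r '' {p₂, q₂} = {p₂, q₂} := by rwa [← setOf_val_eq_or_eq, hp₂, hq₂]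
  have hFp₂ : F p₂ = q₂ := Subtype.ext (by rw [hF, hp₂, hq₂, if_pos (by omega)]; omega)
  have hFq₂ : F q₂ = p₂ := Subtype.ext (by rw [hF, hp₂, hq₂, if_neg (by omega)]; omega)
  have hmaps : (q * F * q⁻¹) (c p₂) = c q₂ := by
    rw [hqcr, mul_inv_rev]
    simpa using congrArg c (r.conj_apply_of_image_pair hr' hFp₂ hFq₂)
  have hqF : q * F * q⁻¹ ∈ fiberPreserving (parity (k := k)) :=
    have hq' := mem_fiberPreserving_of_mem_Qset hq
    mul_mem (mul_mem hq' (mem_fiberPreserving_of_shift hF)) (inv_mem hq')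
  exact hc.sign_eq_one hp₂ hq₂ (hmaps ▸ hqF (c p₂)).symm
end

section
/- Let α be a finite set, F a permutation of α, and Q, C, R subgroups of the group Perm(α) of permutations of α. Assume that for all q ∈ Q, c ∈ C, r ∈ R with q F q⁻¹ = (c r) F (c r)⁻¹ one has sgn(c) = 1. Then the sum Σ sgn(c), taken over all triples (q, c, r) ∈ Q × C × R with (q c r) F (q c r)⁻¹ = F, is strictly positive. -/
/-!
Every nonzero summand equals `+1`: if `(qcr)·F = F` then `q⁻¹·F = cr·F` with `q⁻¹ ∈ Q`, so the
hypothesis gives `sgn c = 1`. The summand at `q = c = r = 1` is nonzero, so the sum is positive.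
-/

theorem Finset.sum_sum_sum_pos {ι κ μ M : Type*} [Fintype ι] [Fintype κ] [Fintype μ]
    [AddCommMonoid M] [PartialOrder M] [IsOrderedCancelAddMonoid M] {f : ι → κ → μ → M}
    (hf : ∀ i j k, 0 ≤ f i j k) (i : ι) (j : κ) (k : μ) (hpos : 0 < f i j k) :
    0 < ∑ i, ∑ j, ∑ k, f i j k := by
  have hsum_nonneg : ∀ i j, 0 ≤ ∑ k, f i j k := fun i j => Finset.sum_nonneg fun k _ => hf i j k
  refine Finset.sum_pos' (fun i _ => Finset.sum_nonneg fun j _ => hsum_nonneg i j)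
    ⟨i, Finset.mem_univ _, ?_⟩
  refine Finset.sum_pos' (fun j _ => hsum_nonneg i j) ⟨j, Finset.mem_univ _, ?_⟩
  exact Finset.sum_pos' (fun k _ => hf i j k) ⟨k, Finset.mem_univ _, hpos⟩

theorem inv_conj_eq_mul_conj_of_mul_conj_eq {G : Type*} [Group G] {q c r x : G}
    (hfix : (q * c * r) * x * (q * c * r)⁻¹ = x) :
    q⁻¹ * x * q⁻¹⁻¹ = (c * r) * x * (c * r)⁻¹ := by
  calc q⁻¹ * x * q⁻¹⁻¹ = q⁻¹ * ((q * c * r) * x * (q * c * r)⁻¹) * q := by rw [hfix, inv_inv]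
    _ = (c * r) * x * (c * r)⁻¹ := by group

open scoped Classical

/-- Let `F` be a permutation of a finite set `α` and `Q, C, R` subgroups of `Perm α`.
If `sgn(c) = 1` whenever `q ∈ Q`, `c ∈ C`, `r ∈ R` satisfy `q·F = cr·F` (conjugation
action), then the sum of `sgn(c)` over all triples `(q, c, r) ∈ Q × C × R` with
`(qcr)·F = F` is strictly positive. -/
theorem coefficient_positive {α : Type*} [Fintype α] [DecidableEq α]
    (F : Equiv.Perm α) (Q C R : Subgroup (Equiv.Perm α))
    (h : ∀ q ∈ Q, ∀ c ∈ C, ∀ r ∈ R,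
      q * F * q⁻¹ = (c * r) * F * (c * r)⁻¹ → Equiv.Perm.sign c = 1) :
    0 < ∑ q : Q, ∑ c : C, ∑ r : R,
      if ((q : Equiv.Perm α) * c * r) * F * ((q : Equiv.Perm α) * c * r)⁻¹ = F
      then ((Equiv.Perm.sign (c : Equiv.Perm α) : ℤ)) else 0 := by
  refine Finset.sum_sum_sum_pos (fun q c r => ?_) 1 1 1 (by simp)
  split_ifs with hfix
  · have hsign : Equiv.Perm.sign (c : Equiv.Perm α) = 1 :=
      h _ (inv_mem q.2) _ c.2 _ r.2 (inv_conj_eq_mul_conj_of_mul_conj_eq hfix)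
    simp [hsign]
  · exact le_rfl
end
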